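/- arXiv:2409.01124 — 4 statements merged into one kernel-verified Lean document; each statement's English description precedes it below -/
import Mathlib

section
/- Let f : ℝⁿ → ℝ be a C² function whose gradient is ρ-Lipschitz, i.e., ‖∇f(x) − ∇f(y)‖ ≤ ρ‖x − y‖ for all x, y, and let 0 < α < 1/ρ. Let θ* be a strict saddle of f, i.e., the Hessian of f at θ* has a negative eigenvalue (there exists a nonzero vector v with ⟨Hess f(θ*) v, v⟩ < 0). Then the set of initial points θ₀ ∈ ℝⁿ for which the gradient descent iterates θ_{k+1} = θ_k − α∇f(θ_k) converge to θ* has Lebesgue measure zero. -/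
/-!
Write `g θ = θ - α ∇f(θ)` and `A = 1 - α H` for its derivative at the saddle, `H` the (symmetric)
Hessian. A negative direction of `H` gives `A` an eigenvalue `> 1`; let `K` be the span of the
eigenvectors of `A` whose eigenvalues have modulus `> 1`, so that `A` expands `K` by a factor
`μ > 1` and does not expand `Kᗮ`. On a small bounded neighbourhood `U` of the saddle, `g` is so
close to `A` that the cone `‖π_{Kᗮ} w‖ ≤ ‖π_K w‖` is mapped into itself with its `K`-component
growing geometrically; hence two distinct points whose orbits never leave `U` never differ by a
vector of the cone. So `π_{Kᗮ}` is injective with Lipschitz inverse on this local stable set,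
whose Hausdorff dimension is therefore at most `dim Kᗮ < n`. Since `αρ < 1`, `g` is
antilipschitz, so the preimages of the local stable set under the iterates of `g`, which cover
the basin of attraction, keep this bound; a set of Hausdorff dimension `< n` is Lebesgue-null.
-/

open MeasureTheory Filter Metric Set Module Submodule InnerProductSpace
open scoped NNReal RealInnerProductSpace Topology

theorem Submodule.dimH_eq_finrank {E : Type*} [NormedAddCommGroup E] [NormedSpace ℝ E]
    (K : Submodule ℝ E) [FiniteDimensional ℝ K] : dimH (K : Set E) = finrank ℝ K := by
  rw [← Real.dimH_univ_eq_finrank K, ← K.subtypeₗᵢ.isometry.dimH_image, image_univ]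
  simp

theorem AntilipschitzWith.le_dimH_image_of_domRestrict {X Y : Type*} [EMetricSpace X]
    [EMetricSpace Y] {K : ℝ≥0} {f : X → Y} {s : Set X}
    (hf : AntilipschitzWith K (s.domRestrict f)) : dimH s ≤ dimH (f '' s) := by
  calc dimH s = dimH (univ : Set s) := by
        rw [← (isometry_subtype_coe (s := s)).dimH_image, image_univ, Subtype.range_coe]
    _ ≤ dimH (s.domRestrict f '' univ) := hf.le_dimH_image univ
    _ = dimH (f '' s) := by rw [image_univ, range_domRestrict]

theorem AntilipschitzWith.iterate {X : Type*} [PseudoEMetricSpace X] {K : ℝ≥0} {g : X → X}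
    (hg : AntilipschitzWith K g) : ∀ k, AntilipschitzWith (K ^ k) g^[k]
  | 0 => by simpa using AntilipschitzWith.id
  | k + 1 => by rw [pow_succ, Function.iterate_succ']; exact hg.comp (hg.iterate k)

theorem MeasureTheory.Measure.measure_eq_zero_of_dimH_lt_finrank {E : Type*}
    [NormedAddCommGroup E] [NormedSpace ℝ E] [FiniteDimensional ℝ E] [MeasurableSpace E]
    [BorelSpace E] (μ : Measure E) [μ.IsAddHaarMeasure] {s : Set E}
    (hs : dimH s < finrank ℝ E) : μ s = 0 := by
  have hμ : μ ≪ μH[(finrank ℝ E : ℝ≥0)] := by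
    rw [NNReal.coe_natCast]
    exact absolutelyContinuous_isAddHaarMeasure μ _
  exact measure_zero_of_dimH_lt hμ (by rwa [ENNReal.coe_natCast])

def localStableSet {X : Type*} (g : X → X) (U : Set X) : Set X := {x | ∀ k, g^[k] x ∈ U}

theorem dimH_setOf_tendsto_iterate_le {X : Type*} [EMetricSpace X] {K : ℝ≥0} {g : X → X}
    (hg : AntilipschitzWith K g) {p : X} {U : Set X} (hU : U ∈ 𝓝 p) :
    dimH {x | Tendsto (fun k => g^[k] x) atTop (𝓝 p)} ≤ dimH (localStableSet g U) := by
  have hsub : {x | Tendsto (fun k => g^[k] x) atTop (𝓝 p)} ⊆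
      ⋃ N, g^[N] ⁻¹' localStableSet g U := by
    intro x hx
    obtain ⟨N, hN⟩ := eventually_atTop.mp (hx hU)
    exact mem_iUnion.mpr ⟨N, fun k => by
      rw [← Function.iterate_add_apply]; exact hN _ (Nat.le_add_left N k)⟩
  calc _ ≤ dimH (⋃ N, g^[N] ⁻¹' localStableSet g U) := dimH_mono hsub
    _ = ⨆ N, dimH (g^[N] ⁻¹' localStableSet g U) := dimH_iUnion _
    _ ≤ _ := iSup_le fun N => (hg.iterate N).dimH_preimage_le _

variable {E : Type*} [NormedAddCommGroup E] [InnerProductSpace ℝ E]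

theorem Submodule.finrank_orthogonal_lt [FiniteDimensional ℝ E] {K : Submodule ℝ E}
    (hK : K ≠ ⊥) : finrank ℝ Kᗮ < finrank ℝ E := by
  have := K.finrank_add_finrank_orthogonal
  have := Submodule.finrank_eq_zero.not.2 hK
  omega

theorem LipschitzWith.antilipschitzWith_sub_smul {G : E → E} {K : ℝ≥0} (hG : LipschitzWith K G)
    {α : ℝ} (hα : ‖α‖₊ * K < 1) :
    AntilipschitzWith (1 - ‖α‖₊ * K)⁻¹ fun x => x - α • G x := by
  have := AntilipschitzWith.id.add_lipschitzWith ((lipschitzWith_smul (-α)).comp hG)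
    (by simpa using hα)
  simpa [sub_eq_add_neg] using this

section DominatedSplitting

structure IsDominatedSplitting (A : E →L[ℝ] E) (K : Submodule ℝ E) (ν μ : ℝ) : Prop where
  mapsTo : ∀ w ∈ K, A w ∈ K
  mapsTo_orthogonal : ∀ w ∈ Kᗮ, A w ∈ Kᗮ
  le_norm_apply : ∀ w ∈ K, μ * ‖w‖ ≤ ‖A w‖
  norm_apply_le : ∀ w ∈ Kᗮ, ‖A w‖ ≤ ν * ‖w‖

def unstableCone (K : Submodule ℝ E) [K.HasOrthogonalProjection] : Set E :=
  {w | ‖Kᗮ.starProjection w‖ ≤ ‖K.starProjection w‖}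

variable {A : E →L[ℝ] E} {K : Submodule ℝ E} [K.HasOrthogonalProjection] {ν μ : ℝ}

theorem norm_le_two_mul_of_mem_unstableCone {w : E} (hw : w ∈ unstableCone K) :
    ‖w‖ ≤ 2 * ‖K.starProjection w‖ := by
  have := norm_add_le (K.starProjection w) (Kᗮ.starProjection w)
  rw [K.starProjection_add_starProjection_orthogonal] at this
  linarith [hw.out]

namespace IsDominatedSplitting

theorem starProjection_apply (hA : IsDominatedSplitting A K ν μ) (w : E) :
    K.starProjection (A w) = A (K.starProjection w) :=
  eq_starProjection_of_mem_orthogonal' (hA.mapsTo _ (K.starProjection_apply_mem w))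
    (hA.mapsTo_orthogonal _ (sub_starProjection_mem_orthogonal w))
    (by rw [← map_add, add_sub_cancel])

theorem orthogonal_starProjection_apply (hA : IsDominatedSplitting A K ν μ) (w : E) :
    Kᗮ.starProjection (A w) = A (Kᗮ.starProjection w) := by
  simp only [starProjection_orthogonal_val, hA.starProjection_apply, map_sub]

theorem add_mem_unstableCone (hA : IsDominatedSplitting A K ν μ) (hν : 0 ≤ ν) {c : ℝ}
    (hc : 0 ≤ c) (hcνμ : ν + 2 * c ≤ μ - 2 * c) {w r : E} (hw : w ∈ unstableCone K)
    (hr : ‖r‖ ≤ c * ‖w‖) :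
    A w + r ∈ unstableCone K ∧
      (μ - 2 * c) * ‖K.starProjection w‖ ≤ ‖K.starProjection (A w + r)‖ := by
  set p := ‖K.starProjection w‖
  have hr' : ‖r‖ ≤ 2 * c * p := by
    nlinarith [norm_le_two_mul_of_mem_unstableCone hw]
  have hP : (μ - 2 * c) * p ≤ ‖K.starProjection (A w + r)‖ := by
    have hexp := hA.le_norm_apply _ (K.starProjection_apply_mem w)
    have := norm_le_add_norm_add (A (K.starProjection w)) (K.starProjection r)
    rw [map_add, hA.starProjection_apply]
    linarith [K.norm_starProjection_apply_le r]
  have hQ : ‖Kᗮ.starProjection (A w + r)‖ ≤ (ν + 2 * c) * p := by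
    have hcon := hA.norm_apply_le _ (Kᗮ.starProjection_apply_mem w)
    rw [map_add, hA.orthogonal_starProjection_apply]
    nlinarith [norm_add_le (A (Kᗮ.starProjection w)) (Kᗮ.starProjection r),
      Kᗮ.norm_starProjection_apply_le r, hw.out]
  exact ⟨hQ.trans ((mul_le_mul_of_nonneg_right hcνμ (norm_nonneg _)).trans hP), hP⟩

variable {g : E → E} {U : Set E} {c : ℝ≥0}

theorem iterate_sub_mem_unstableCone (hA : IsDominatedSplitting A K ν μ) (hν : 0 ≤ ν)
    (hcνμ : ν + 2 * c ≤ μ - 2 * c) (hg : ApproximatesLinearOn g A U c) {x y : E}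
    (hx : x ∈ localStableSet g U) (hy : y ∈ localStableSet g U)
    (hxy : x - y ∈ unstableCone K) (k : ℕ) :
    g^[k] x - g^[k] y ∈ unstableCone K ∧
      (μ - 2 * c) ^ k * ‖K.starProjection (x - y)‖ ≤
        ‖K.starProjection (g^[k] x - g^[k] y)‖ := by
  induction k with
  | zero => simpa using hxy
  | succ k ih =>
    set w := g^[k] x - g^[k] y
    have hstep := hA.add_mem_unstableCone hν c.coe_nonneg hcνμ ih.1
      (r := g (g^[k] x) - g (g^[k] y) - A w) (hg _ (hx k) _ (hy k))
    rw [add_sub_cancel] at hstep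
    simp only [Function.iterate_succ_apply']
    refine ⟨hstep.1, ?_⟩
    have hμc : 0 ≤ μ - 2 * c := by linarith [c.coe_nonneg]
    calc (μ - 2 * c) ^ (k + 1) * ‖K.starProjection (x - y)‖
        = (μ - 2 * c) * ((μ - 2 * c) ^ k * ‖K.starProjection (x - y)‖) := by ring
      _ ≤ (μ - 2 * c) * ‖K.starProjection w‖ := mul_le_mul_of_nonneg_left ih.2 hμc
      _ ≤ _ := hstep.2

theorem eq_of_sub_mem_unstableCone (hA : IsDominatedSplitting A K ν μ) (hν : 0 ≤ ν)
    (hμc : 1 < μ - 2 * c) (hcνμ : ν + 2 * c ≤ μ - 2 * c) (hg : ApproximatesLinearOn g A U c)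
    (hU : Bornology.IsBounded U) {x y : E} (hx : x ∈ localStableSet g U)
    (hy : y ∈ localStableSet g U) (hxy : x - y ∈ unstableCone K) : x = y := by
  obtain ⟨C, hC⟩ := isBounded_iff.1 hU
  have hP : K.starProjection (x - y) = 0 := by
    by_contra hne
    have hpos := norm_pos_iff.2 hne
    obtain ⟨k, hk⟩ := pow_unbounded_of_one_lt (C / ‖K.starProjection (x - y)‖) hμc
    have hgrow := (hA.iterate_sub_mem_unstableCone hν hcνμ hg hx hy hxy k).2
    have hbound : ‖K.starProjection (g^[k] x - g^[k] y)‖ ≤ C :=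
      (K.norm_starProjection_apply_le _).trans (by simpa [dist_eq_norm] using hC (hx k) (hy k))
    rw [div_lt_iff₀ hpos] at hk
    linarith
  have := norm_le_two_mul_of_mem_unstableCone hxy
  rw [hP, norm_zero, mul_zero] at this
  exact sub_eq_zero.1 (norm_le_zero_iff.1 this)

theorem norm_sub_le_two_mul_norm_starProjection_sub (hA : IsDominatedSplitting A K ν μ)
    (hν : 0 ≤ ν) (hμc : 1 < μ - 2 * c) (hcνμ : ν + 2 * c ≤ μ - 2 * c)
    (hg : ApproximatesLinearOn g A U c) (hU : Bornology.IsBounded U) {x y : E}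
    (hx : x ∈ localStableSet g U) (hy : y ∈ localStableSet g U) :
    ‖x - y‖ ≤ 2 * ‖Kᗮ.starProjection (x - y)‖ := by
  by_cases hxy : x - y ∈ unstableCone K
  · simp [hA.eq_of_sub_mem_unstableCone hν hμc hcνμ hg hU hx hy hxy]
  · have hlt : ‖K.starProjection (x - y)‖ < ‖Kᗮ.starProjection (x - y)‖ := not_le.1 hxy
    have := norm_add_le (K.starProjection (x - y)) (Kᗮ.starProjection (x - y))
    rw [K.starProjection_add_starProjection_orthogonal] at this
    linarith

theorem dimH_localStableSet_le [FiniteDimensional ℝ E] (hA : IsDominatedSplitting A K ν μ)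
    (hν : 0 ≤ ν) (hμc : 1 < μ - 2 * c) (hcνμ : ν + 2 * c ≤ μ - 2 * c)
    (hg : ApproximatesLinearOn g A U c) (hU : Bornology.IsBounded U) :
    dimH (localStableSet g U) ≤ finrank ℝ Kᗮ := by
  have hQ : AntilipschitzWith 2 ((localStableSet g U).domRestrict Kᗮ.starProjection) :=
    AntilipschitzWith.of_le_mul_dist fun x y => by
      simpa [Subtype.dist_eq, dist_eq_norm, map_sub] using
        hA.norm_sub_le_two_mul_norm_starProjection_sub hν hμc hcνμ hg hU x.2 y.2
  calc dimH (localStableSet g U) ≤ dimH (Kᗮ.starProjection '' localStableSet g U) :=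
        hQ.le_dimH_image_of_domRestrict
    _ ≤ dimH (Kᗮ : Set E) :=
        dimH_mono (image_subset_iff.2 fun x _ => Kᗮ.starProjection_apply_mem x)
    _ = finrank ℝ Kᗮ := Kᗮ.dimH_eq_finrank

end IsDominatedSplitting

end DominatedSplitting

namespace OrthonormalBasis

variable {ι : Type*} [Fintype ι] (b : OrthonormalBasis ι ℝ E)

theorem mem_span_image_iff {s : Set ι} {w : E} :
    w ∈ span ℝ (b '' s) ↔ ∀ i ∉ s, b.repr w i = 0 := by
  rw [← b.coe_toBasis, Module.Basis.mem_span_image]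
  simp [Set.subset_def, not_imp_comm]

theorem repr_eq_zero_of_mem_orthogonal_span_image {s : Set ι} {w : E}
    (hw : w ∈ (span ℝ (b '' s))ᗮ) {i : ι} (hi : i ∈ s) : b.repr w i = 0 := by
  rw [b.repr_apply_apply]
  exact inner_right_of_mem_orthogonal (subset_span (mem_image_of_mem b hi)) hw

theorem norm_sq_eq_sum_repr_sq (w : E) : ‖w‖ ^ 2 = ∑ i, b.repr w i ^ 2 := by
  simp [b.repr_apply_apply, b.sum_sq_inner_right]

variable {A : E → E} {a : ι → ℝ}

theorem inner_apply_self_eq_sum (hA : ∀ w i, b.repr (A w) i = a i * b.repr w i) (w : E) :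
    ⟪A w, w⟫ = ∑ i, a i * b.repr w i ^ 2 := by
  rw [← b.sum_inner_mul_inner]
  refine Finset.sum_congr rfl fun i _ => ?_
  rw [real_inner_comm, ← b.repr_apply_apply, ← b.repr_apply_apply, hA]
  ring

theorem norm_apply_le_of_repr (hA : ∀ w i, b.repr (A w) i = a i * b.repr w i) {ν : ℝ}
    (hν : 0 ≤ ν) {w : E} (hw : ∀ i, b.repr w i ≠ 0 → |a i| ≤ ν) : ‖A w‖ ≤ ν * ‖w‖ := by
  refine (pow_le_pow_iff_left₀ (norm_nonneg _) (by positivity) two_ne_zero).1 ?_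
  rw [mul_pow, b.norm_sq_eq_sum_repr_sq, b.norm_sq_eq_sum_repr_sq, Finset.mul_sum]
  refine Finset.sum_le_sum fun i _ => ?_
  rw [hA, mul_pow]
  by_cases hi : b.repr w i = 0
  · simp [hi]
  · refine mul_le_mul_of_nonneg_right ?_ (sq_nonneg _)
    rw [← sq_abs (a i)]
    exact pow_le_pow_left₀ (abs_nonneg _) (hw i hi) 2

theorem le_norm_apply_of_repr (hA : ∀ w i, b.repr (A w) i = a i * b.repr w i) {μ : ℝ}
    (hμ : 0 ≤ μ) {w : E} (hw : ∀ i, b.repr w i ≠ 0 → μ ≤ |a i|) : μ * ‖w‖ ≤ ‖A w‖ := by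
  refine (pow_le_pow_iff_left₀ (by positivity) (norm_nonneg _) two_ne_zero).1 ?_
  rw [mul_pow, b.norm_sq_eq_sum_repr_sq, b.norm_sq_eq_sum_repr_sq, Finset.mul_sum]
  refine Finset.sum_le_sum fun i _ => ?_
  rw [hA, mul_pow]
  by_cases hi : b.repr w i = 0
  · simp [hi]
  · refine mul_le_mul_of_nonneg_right ?_ (sq_nonneg _)
    rw [← sq_abs (a i)]
    exact pow_le_pow_left₀ hμ (hw i hi) 2

end OrthonormalBasis

namespace LinearMap.IsSymmetric

theorem exists_isDominatedSplitting [FiniteDimensional ℝ E] {A : E →L[ℝ] E}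
    (hA : (A : E →ₗ[ℝ] E).IsSymmetric) {v : E} (hv : ‖v‖ ^ 2 < ⟪A v, v⟫) :
    ∃ K : Submodule ℝ E, K ≠ ⊥ ∧ ∃ μ, 1 < μ ∧ IsDominatedSplitting A K 1 μ := by
  set b := hA.eigenvectorBasis rfl
  set a := hA.eigenvalues rfl
  have hdiag : ∀ w i, b.repr (A w) i = a i * b.repr w i :=
    hA.eigenvectorBasis_apply_self_apply rfl
  obtain ⟨i₀, hi₀⟩ : ∃ i, 1 < |a i| := by
    by_contra! h
    refine hv.not_ge ?_
    rw [b.inner_apply_self_eq_sum hdiag, b.norm_sq_eq_sum_repr_sq]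
    exact Finset.sum_le_sum fun i _ =>
      mul_le_of_le_one_left (sq_nonneg _) ((le_abs_self _).trans (h i))
  have : Nonempty {i // 1 < |a i|} := ⟨⟨i₀, hi₀⟩⟩
  obtain ⟨j, hj⟩ := Finite.exists_min fun i : {i // 1 < |a i|} => |a i|
  set K := span ℝ (b '' {i | 1 < |a i|})
  have hmapsTo : ∀ w ∈ K, A w ∈ K := fun w hw => by
    rw [b.mem_span_image_iff] at hw ⊢
    intro i hi
    rw [hdiag, hw i hi, mul_zero]
  refine ⟨K, (Submodule.ne_bot_iff K).2 ⟨b i₀, subset_span ⟨i₀, hi₀, rfl⟩,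
    b.orthonormal.ne_zero i₀⟩, |a j|, j.2, hmapsTo, fun w hw => ?_, fun w hw => ?_,
    fun w hw => ?_⟩
  · rw [Submodule.mem_orthogonal] at hw ⊢
    intro u hu
    exact (hA u w).symm.trans (hw _ (hmapsTo u hu))
  · refine b.le_norm_apply_of_repr hdiag (abs_nonneg _) fun i hi => hj ⟨i, ?_⟩
    by_contra h
    exact hi (b.mem_span_image_iff.1 hw i h)
  · refine b.norm_apply_le_of_repr hdiag zero_le_one fun i hi => not_lt.1 fun h => ?_
    exact hi (b.repr_eq_zero_of_mem_orthogonal_span_image hw h)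

theorem exists_isDominatedSplitting_id_sub_smul [FiniteDimensional ℝ E] {H : E →L[ℝ] E}
    (hH : (H : E →ₗ[ℝ] E).IsSymmetric) {v : E} (hv : ⟪H v, v⟫ < 0) {α : ℝ} (hα : 0 < α) :
    ∃ K : Submodule ℝ E, K ≠ ⊥ ∧ ∃ μ, 1 < μ ∧
      IsDominatedSplitting (ContinuousLinearMap.id ℝ E - α • H) K 1 μ := by
  refine exists_isDominatedSplitting (by simpa using IsSymmetric.id.sub (hH.smul (conj_trivial α)))
    (v := v) ?_
  have : ⟪(ContinuousLinearMap.id ℝ E - α • H) v, v⟫ = ‖v‖ ^ 2 - α * ⟪H v, v⟫ := by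
    simp [inner_sub_left, real_inner_smul_left]
  nlinarith

end LinearMap.IsSymmetric

section Gradient

variable [CompleteSpace E] {f : E → ℝ}

theorem contDiff_gradient (hf : ContDiff ℝ 2 f) : ContDiff ℝ 1 (gradient f) :=
  (toDual ℝ E).symm.contDiff.comp (hf.fderiv_right one_add_one_eq_two.le)

theorem inner_fderiv_gradient_apply (f : E → ℝ) (x u w : E) :
    ⟪fderiv ℝ (gradient f) x u, w⟫ = fderiv ℝ (fderiv ℝ f) x u w := by
  have : gradient f = (toDual ℝ E).symm ∘ fderiv ℝ f := rfl
  rw [this, LinearIsometryEquiv.comp_fderiv]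
  exact toDual_symm_apply

theorem ContDiff.isSymmetric_fderiv_gradient (hf : ContDiff ℝ 2 f) (x : E) :
    (fderiv ℝ (gradient f) x : E →ₗ[ℝ] E).IsSymmetric := fun u w => by
  rw [ContinuousLinearMap.coe_coe, real_inner_comm (fderiv ℝ (gradient f) x w),
    inner_fderiv_gradient_apply, inner_fderiv_gradient_apply]
  exact hf.contDiffAt.isSymmSndFDerivAt (by simp) u w

end Gradient

/-- Theorem 1 (Lee et al.): gradient descent with step size `0 < α < 1/ρ` on a `C²` function
with `ρ`-Lipschitz gradient converges to a strict saddle `θs` only from a set of initial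
points of Lebesgue measure zero. -/
theorem stmt_1 {n : ℕ} (f : EuclideanSpace ℝ (Fin n) → ℝ)
    (hf : ContDiff ℝ 2 f) (ρ : ℝ) (hρ : 0 < ρ)
    (hlip : ∀ x y, ‖gradient f x - gradient f y‖ ≤ ρ * ‖x - y‖)
    (α : ℝ) (hα₀ : 0 < α) (hα₁ : α < 1 / ρ)
    (θs : EuclideanSpace ℝ (Fin n))
    (hsaddle : ∃ v : EuclideanSpace ℝ (Fin n), v ≠ 0 ∧
      inner (𝕜 := ℝ) (fderiv ℝ (gradient f) θs v) v < 0) :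
    volume {θ₀ : EuclideanSpace ℝ (Fin n) |
      Tendsto (fun k => (fun θ => θ - α • gradient f θ)^[k] θ₀) atTop (nhds θs)} = 0 := by
  obtain ⟨v, -, hv⟩ := hsaddle
  obtain ⟨K, hK, μ, hμ, hA⟩ :=
    (hf.isSymmetric_fderiv_gradient θs).exists_isDominatedSplitting_id_sub_smul hv hα₀
  have hgA : HasStrictFDerivAt (fun θ => θ - α • gradient f θ)
      (ContinuousLinearMap.id ℝ _ - α • fderiv ℝ (gradient f) θs) θs :=
    (hasStrictFDerivAt_id θs).sub
      (((contDiff_gradient hf).hasStrictFDerivAt one_ne_zero).const_smul α)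
  set c := ((μ - 1) / 8).toNNReal
  have hc : (c : ℝ) = (μ - 1) / 8 := Real.coe_toNNReal _ (by linarith)
  obtain ⟨U, hU, hgU⟩ := hgA.approximates_deriv_on_nhds (c := c) (Or.inr (by simpa [c] using hμ))
  have hαρ : ‖α‖₊ * ρ.toNNReal < 1 := by
    rw [lt_div_iff₀ hρ] at hα₁
    rw [← NNReal.coe_lt_coe]
    simpa [abs_of_pos hα₀, hρ.le] using hα₁
  have hanti := (LipschitzWith.of_dist_le' (f := gradient f) fun x y => by
    rw [dist_eq_norm, dist_eq_norm]; exact hlip x y).antilipschitzWith_sub_smul hαρ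
  refine Measure.measure_eq_zero_of_dimH_lt_finrank volume ?_
  calc _ ≤ dimH (localStableSet _ (U ∩ closedBall θs 1)) :=
        dimH_setOf_tendsto_iterate_le hanti (inter_mem hU (closedBall_mem_nhds θs one_pos))
    _ ≤ finrank ℝ Kᗮ := hA.dimH_localStableSet_le zero_le_one (by rw [hc]; linarith)
        (by rw [hc]; linarith) (hgU.mono_set inter_subset_left)
        (isBounded_closedBall.subset inter_subset_right)
    _ < finrank ℝ _ := by exact_mod_cast Submodule.finrank_orthogonal_lt hK
end

section
/- Let g, V₀ ∈ ℝ with g ≠ 0 and V₀/g > 0, and define u : ℝ → ℝ by u(x) = √(V₀/g)·e^{−x²/2}. Then u satisfies the stationary NLS equation with harmonic-Gaussian potential −u''(x) + (x² − V₀e^{−x²})u(x) + g·u(x)³ − u(x) = 0 for all x ∈ ℝ. -/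
lemma aux_deriv (c : ℝ) (x : ℝ) :
    HasDerivAt (fun x : ℝ => c * Real.exp (-x ^ 2 / 2))
      (c * Real.exp (-x ^ 2 / 2) * (-x)) x := by
  have h1 : HasDerivAt (fun x : ℝ => -x ^ 2 / 2) (-x) x := by
    have := ((hasDerivAt_pow 2 x).neg.div_const 2)
    simpa using this.congr_deriv (by ring)
  exact (h1.exp.const_mul c).congr_deriv (by ring)

/-- The exact ground state `u(x) = √(V₀/g) e^{−x²/2}` solves the stationary NLS equation with
harmonic-Gaussian potential `−u'' + (x² − V₀e^{−x²})u + gu³ − u = 0` (propagation constant μ = 1). -/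
theorem stmt_7 (g V₀ : ℝ) (hg : g ≠ 0) (hVg : 0 < V₀ / g) (u : ℝ → ℝ)
    (hu : ∀ x, u x = Real.sqrt (V₀ / g) * Real.exp (-x ^ 2 / 2)) :
    ∀ x, -deriv (deriv u) x + (x ^ 2 - V₀ * Real.exp (-x ^ 2)) * u x
        + g * u x ^ 3 - u x = 0 := by
  set c := Real.sqrt (V₀ / g) with hc
  have hue : u = fun x => c * Real.exp (-x ^ 2 / 2) := funext hu
  subst hue
  have hd1 : deriv (fun x : ℝ => c * Real.exp (-x ^ 2 / 2))
      = fun x => (c * Real.exp (-x ^ 2 / 2)) * (-x) :=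
    funext fun x => (aux_deriv c x).deriv
  intro x
  have hd2 : deriv (deriv (fun x : ℝ => c * Real.exp (-x ^ 2 / 2))) x
      = c * (Real.exp (-x ^ 2 / 2) * (x ^ 2 - 1)) := by
    rw [hd1]
    have h2 : HasDerivAt (fun x : ℝ => (c * Real.exp (-x ^ 2 / 2)) * (-x))
        ((c * Real.exp (-x ^ 2 / 2) * (-x)) * (-x)
          + (c * Real.exp (-x ^ 2 / 2)) * (-1)) x :=
      (aux_deriv c x).mul (hasDerivAt_id x).neg
    exact (h2.congr_deriv (by ring)).deriv
  rw [hd2]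
  have hc2 : c ^ 2 = V₀ / g := Real.sq_sqrt hVg.le
  have hexp : Real.exp (-x ^ 2) = Real.exp (-x ^ 2 / 2) * Real.exp (-x ^ 2 / 2) := by
    rw [← Real.exp_add]; ring_nf
  have hgc : g * c ^ 2 = V₀ := by rw [hc2]; field_simp
  rw [hexp]
  simp only
  linear_combination (c * Real.exp (-x ^ 2 / 2) ^ 3) * hgc
end

section
/- Let V₀, W₀, g ∈ ℝ with g ≠ 0 and −(2 + V₀ + W₀²/9)/g > 0, set A = √(−(2 + V₀ + W₀²/9)/g), and define u : ℝ → ℂ by u(x) = A·sech(x)·exp(−i(W₀/3)·arctan(sinh(x))). Then u satisfies the stationary NLS equation with PT-symmetric Scarf-II potential and propagation constant μ = −1: −u''(x) + (V₀sech²(x) + iW₀sech(x)tanh(x))u(x) + g|u(x)|²u(x) + u(x) = 0 for all x ∈ ℝ. -/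
/-!
Write `θ = arctan ∘ sinh`, so that `θ' = sech`. The profile `u = A sech x · exp (k θ x)` then has
logarithmic derivative `(k - sinh x) / cosh x`, whence
`u'' = u · (sinh² x - 3 k sinh x + k² - 1) / cosh² x`. For `k = -i W₀/3` the term `-3 k sinh x`
cancels the gain-loss part of the potential and `k² = -W₀²/9`, so the equation collapses to
`g A² = -(2 + V₀ + W₀²/9)` together with `tanh² + sech² = 1`.
-/

open Complex

theorem Real.hasDerivAt_arctan_sinh (x : ℝ) :
    HasDerivAt (fun t => Real.arctan (Real.sinh t)) (Real.cosh x)⁻¹ x := by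
  refine ((Real.hasDerivAt_arctan _).comp x (Real.hasDerivAt_sinh x)).congr_deriv ?_
  have := (Real.cosh_pos x).ne'
  rw [← Real.cosh_sq']
  field_simp

noncomputable def scarfProfile (a : ℝ) (k : ℂ) (x : ℝ) : ℂ :=
  ((a * (1 / Real.cosh x) : ℝ) : ℂ) * exp (k * Real.arctan (Real.sinh x))

lemma ofReal_cosh_ne_zero (x : ℝ) : ((Real.cosh x : ℝ) : ℂ) ≠ 0 :=
  ofReal_ne_zero.mpr (Real.cosh_pos x).ne'

lemma ofReal_cosh_sq (x : ℝ) : ((Real.cosh x : ℝ) : ℂ) ^ 2 = 1 + (Real.sinh x : ℂ) ^ 2 := by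
  exact_mod_cast Real.cosh_sq' x

lemma hasDerivAt_scarfProfile (a : ℝ) (k : ℂ) (x : ℝ) :
    HasDerivAt (scarfProfile a k)
      (scarfProfile a k x * ((k - Real.sinh x) / Real.cosh x)) x := by
  have hamp : HasDerivAt (fun t => ((a * (1 / Real.cosh t) : ℝ) : ℂ))
      (((a * -(Real.sinh x / Real.cosh x ^ 2)) : ℝ) : ℂ) x := by
    refine (((hasDerivAt_const x (1 : ℝ)).div (Real.hasDerivAt_cosh x)
      (Real.cosh_pos x).ne').const_mul a).ofReal_comp.congr_deriv ?_
    congr 2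
    ring
  have hphase := ((Real.hasDerivAt_arctan_sinh x).ofReal_comp.const_mul k).cexp
  refine (hamp.mul hphase).congr_deriv ?_
  simp only [scarfProfile, ofReal_mul, ofReal_div, ofReal_neg, ofReal_pow, ofReal_one,
    ofReal_inv]
  field_simp [ofReal_cosh_ne_zero x]
  ring

lemma deriv_scarfProfile (a : ℝ) (k : ℂ) :
    deriv (scarfProfile a k) =
      fun x => scarfProfile a k x * ((k - Real.sinh x) / Real.cosh x) :=
  funext fun x => (hasDerivAt_scarfProfile a k x).deriv

lemma hasDerivAt_sub_sinh_div_cosh (k : ℂ) (x : ℝ) :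
    HasDerivAt (fun t : ℝ => (k - Real.sinh t) / Real.cosh t)
      (-(1 + k * Real.sinh x) / Real.cosh x ^ 2) x := by
  refine (((Real.hasDerivAt_sinh x).ofReal_comp.const_sub k).div
    (Real.hasDerivAt_cosh x).ofReal_comp (ofReal_cosh_ne_zero x)).congr_deriv ?_
  linear_combination (-1 / (Real.cosh x : ℂ) ^ 2) * ofReal_cosh_sq x

lemma deriv_deriv_scarfProfile (a : ℝ) (k : ℂ) (x : ℝ) :
    deriv (deriv (scarfProfile a k)) x = scarfProfile a k x *
      ((Real.sinh x ^ 2 - 3 * k * Real.sinh x + k ^ 2 - 1) / Real.cosh x ^ 2) := by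
  rw [deriv_scarfProfile]
  refine ((hasDerivAt_scarfProfile a k x).mul (hasDerivAt_sub_sinh_div_cosh k x)).deriv.trans ?_
  field_simp [ofReal_cosh_ne_zero x]
  ring

lemma norm_scarfProfile (a : ℝ) {k : ℂ} (hk : k.re = 0) (x : ℝ) :
    ‖scarfProfile a k x‖ = |a| / Real.cosh x := by
  rw [scarfProfile, norm_mul, norm_exp, re_mul_ofReal, hk, zero_mul, Real.exp_zero, mul_one,
    norm_real, Real.norm_eq_abs, abs_mul, one_div, abs_inv, abs_of_pos (Real.cosh_pos x),
    div_eq_mul_inv]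

/-- The exact soliton of the stationary NLS equation with PT-symmetric Scarf-II potential
`V(x) = V₀ sech²x + iW₀ sech x tanh x` and propagation constant `μ = −1`:
`u(x) = A sech(x) exp(−i(W₀/3) arctan(sinh x))` with `A = √(−(2 + V₀ + W₀²/9)/g)`. -/
theorem stmt_8 (V₀ W₀ g : ℝ) (hg : g ≠ 0) (hA : 0 < -(2 + V₀ + W₀ ^ 2 / 9) / g)
    (A : ℝ) (hAdef : A = Real.sqrt (-(2 + V₀ + W₀ ^ 2 / 9) / g))
    (u : ℝ → ℂ)
    (hu : ∀ x, u x = ((A * (1 / Real.cosh x) : ℝ) : ℂ)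
      * Complex.exp (-Complex.I * (W₀ / 3) * Real.arctan (Real.sinh x))) :
    ∀ x : ℝ,
      -deriv (deriv u) x
        + (((V₀ * (1 / Real.cosh x) ^ 2 : ℝ) : ℂ)
            + Complex.I * (W₀ : ℂ) * ((1 / Real.cosh x * Real.tanh x : ℝ) : ℂ)) * u x
        + (g : ℂ) * (‖u x‖ : ℂ) ^ 2 * u x + u x = 0 := by
  intro x
  have hu' : u = scarfProfile A (-I * (W₀ / 3)) := funext hu
  have hnorm : (‖u x‖ : ℂ) ^ 2 = A ^ 2 / Real.cosh x ^ 2 := by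
    rw [← ofReal_pow, hu', norm_scarfProfile A (by simp), div_pow, sq_abs]
    simp only [ofReal_div, ofReal_pow]
  have hgA : (g : ℂ) * A ^ 2 = -(2 + V₀ + W₀ ^ 2 / 9) := by
    rw [hAdef, ← ofReal_pow, Real.sq_sqrt hA.le]
    push_cast
    field_simp [ofReal_ne_zero.mpr hg]
  rw [hnorm, hu', deriv_deriv_scarfProfile, Real.tanh_eq_sinh_div_cosh]
  have hsech : (Real.sinh x : ℂ) ^ 2 / Real.cosh x ^ 2 = 1 - 1 / Real.cosh x ^ 2 := by
    rw [eq_sub_iff_add_eq, ← add_div, add_comm, ← ofReal_cosh_sq,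
      div_self (pow_ne_zero 2 (ofReal_cosh_ne_zero x))]
  simp only [ofReal_mul, ofReal_div, ofReal_pow, ofReal_one]
  set v := scarfProfile A (-I * (W₀ / 3)) x
  linear_combination (-v) * hsech + v / Real.cosh x ^ 2 * hgA
    - v * W₀ ^ 2 / (9 * Real.cosh x ^ 2) * I_sq
end

section
/- Let A, B, c ∈ ℝ satisfy A² − B² = 2c², set μ = c², and define u₁(x) = A·sech(cx) and u₂(x) = B·sech(cx). Then (u₁, u₂) satisfies the stationary focusing-defocusing coupled NLS system: u₁''(x) + (u₁(x)² − u₂(x)²)u₁(x) − μu₁(x) = 0 and u₂''(x) + (u₁(x)² − u₂(x)²)u₂(x) − μu₂(x) = 0 for all x ∈ ℝ. -/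
/-!
With `s = sech (c x)` one has `s' = −c sinh (c x) / cosh² (c x)`, and differentiating once more,
`sinh² = cosh² − 1` gives `s'' = c² s − 2 c² s³`. Both components are multiples `K s` of the
same profile, so the coupling `u₁² − u₂² = (A² − B²) s² = 2 c² s²` turns the cubic term into
`2 c² K s³`, which cancels the cubic part of `(K s)''`, while `μ K s = c² K s` cancels its linear part.
-/

open Real

lemma hasDerivAt_cosh_mul (c x : ℝ) :
    HasDerivAt (fun x => cosh (c * x)) (sinh (c * x) * c) x := by
  simpa using ((hasDerivAt_id x).const_mul c).cosh

lemma hasDerivAt_sech_mul (c x : ℝ) :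
    HasDerivAt (fun x => 1 / cosh (c * x)) (-(c * sinh (c * x)) / cosh (c * x) ^ 2) x :=
  ((hasDerivAt_const x 1).fun_div (hasDerivAt_cosh_mul c x)
    (cosh_pos (c * x)).ne').congr_deriv (by ring)

lemma hasDerivAt_deriv_sech_mul (c x : ℝ) :
    HasDerivAt (fun x => -(c * sinh (c * x)) / cosh (c * x) ^ 2)
      (c ^ 2 * (1 / cosh (c * x)) - 2 * c ^ 2 * (1 / cosh (c * x)) ^ 3) x := by
  have hsinh : HasDerivAt (fun x => sinh (c * x)) (cosh (c * x) * c) x := by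
    simpa using ((hasDerivAt_id x).const_mul c).sinh
  have hcosh_ne := (cosh_pos (c * x)).ne'
  refine ((hsinh.const_mul c).fun_neg.fun_div ((hasDerivAt_cosh_mul c x).fun_pow 2)
    (pow_ne_zero 2 hcosh_ne)).congr_deriv ?_
  have hsinh_sq : sinh (c * x) ^ 2 = cosh (c * x) ^ 2 - 1 := by
    linarith [cosh_sq (c * x)]
  norm_num
  field_simp
  linear_combination 2 * c ^ 2 * hsinh_sq

lemma deriv_deriv_sech_mul (c x : ℝ) :
    deriv (deriv fun x => 1 / cosh (c * x)) x =
      c ^ 2 * (1 / cosh (c * x)) - 2 * c ^ 2 * (1 / cosh (c * x)) ^ 3 := by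
  have hderiv : deriv (fun x => 1 / cosh (c * x)) =
      fun x => -(c * sinh (c * x)) / cosh (c * x) ^ 2 :=
    funext fun y => (hasDerivAt_sech_mul c y).deriv
  rw [hderiv]
  exact (hasDerivAt_deriv_sech_mul c x).deriv

lemma sech_soliton_component {A B c : ℝ} (hABc : A ^ 2 - B ^ 2 = 2 * c ^ 2) (K x : ℝ) :
    deriv (deriv fun x => K * (1 / cosh (c * x))) x +
        ((A * (1 / cosh (c * x))) ^ 2 - (B * (1 / cosh (c * x))) ^ 2) * (K * (1 / cosh (c * x))) -
        c ^ 2 * (K * (1 / cosh (c * x))) = 0 := by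
  simp only [deriv_const_mul_field', deriv_deriv_sech_mul]
  linear_combination K * (1 / cosh (c * x)) ^ 3 * hABc

/-- The exact single-soliton solutions `u₁ = A sech(cx)`, `u₂ = B sech(cx)` with
`A² − B² = 2c²` and `μ = c²` solve the stationary focusing-defocusing coupled NLS system. -/
theorem stmt_9 (A B c : ℝ) (hABc : A ^ 2 - B ^ 2 = 2 * c ^ 2) (μ : ℝ) (hμ : μ = c ^ 2)
    (u₁ u₂ : ℝ → ℝ)
    (hu₁ : ∀ x, u₁ x = A * (1 / Real.cosh (c * x)))
    (hu₂ : ∀ x, u₂ x = B * (1 / Real.cosh (c * x))) :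
    (∀ x, deriv (deriv u₁) x + (u₁ x ^ 2 - u₂ x ^ 2) * u₁ x - μ * u₁ x = 0) ∧
    (∀ x, deriv (deriv u₂) x + (u₁ x ^ 2 - u₂ x ^ 2) * u₂ x - μ * u₂ x = 0) := by
  obtain rfl : u₁ = fun x => A * (1 / cosh (c * x)) := funext hu₁
  obtain rfl : u₂ = fun x => B * (1 / cosh (c * x)) := funext hu₂
  subst hμ
  exact ⟨sech_soliton_component hABc A, sech_soliton_component hABc B⟩
end
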